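/- Let d ≥ 1 and N ≥ 2 be integers and let k be an integer with 1 ≤ k ≤ N−1. Then binom(N−2, k−1) · B(k + 2/d, N − k) = binom(2/d + k − 1, k − 1) · B(1 + 2/d, N − 1), where binom(N−2, k−1) is the usual binomial coefficient and binom(2/d + k − 1, k − 1) := (∏_{j=1}^{k−1} (2/d + j)/j) is a generalized binomial coefficient. Consequently, the scaling factor λ_K(N) := [(N−1) (d^{2/d−1}/2) Σ_{k=1}^K α_k binom(N−2,k−1) B(k+2/d, N−k)]^{−1} of the K-nearest-neighbor dynamics equals (Σ_{k=1}^K binom(2/d+k−1, k−1) α_k)^{−1} times the scaling factor λ₁(N) := [(N−1)(d^{2/d−1}/2) B(1+2/d, N−1)]^{−1} of the nearest-neighbor dynamics, for any nonnegative weights α₁,…,α_K with Σ_{k=1}^K α_k = 1 and K ≤ N−1. -/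

import Mathlib

open MeasureTheory

/-- The Beta function `B(a,b) = ∫₀¹ u^(a-1) (1-u)^(b-1) du`. -/
noncomputable def betaFn (a b : ℝ) : ℝ := ∫ u in (0:ℝ)..1, u ^ (a - 1) * (1 - u) ^ (b - 1)

/-- The generalized binomial coefficient `binom(z,k) = z(z-1)⋯(z-k+1)/k!` for real `z`. -/
noncomputable def genBinom (z : ℝ) (k : ℕ) : ℝ :=
  (∏ j ∈ Finset.range k, (z - j)) / (Nat.factorial k)

lemma betaFn_eval (a : ℝ) (ha : 0 < a) (n : ℕ) :
    betaFn a ((n:ℝ) + 1) = (Nat.factorial n) / ∏ j ∈ Finset.range (n + 1), (a + j) := by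
  have h := Complex.betaIntegral_eval_nat_add_one_right (u := (a:ℂ)) (by simpa using ha) n
  have hcast : ((betaFn a ((n:ℝ) + 1) : ℝ) : ℂ) = Complex.betaIntegral a ((n:ℕ) + 1) := by
    rw [betaFn, Complex.betaIntegral, ← intervalIntegral.integral_ofReal]
    refine intervalIntegral.integral_congr (fun x hx => ?_)
    rw [Set.uIcc_of_le zero_le_one] at hx
    push_cast
    rw [Complex.ofReal_cpow hx.1, Complex.ofReal_cpow (by linarith [hx.2])]
    push_cast
    ring_nf
  have : ((betaFn a ((n:ℝ) + 1) : ℝ) : ℂ)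
      = (((Nat.factorial n) / ∏ j ∈ Finset.range (n + 1), (a + j) : ℝ) : ℂ) := by
    rw [hcast, h]; push_cast; ring
  exact_mod_cast this

/-- For integers `d ≥ 1`, `N ≥ 2` and `1 ≤ k ≤ N-1`,
`binom(N-2, k-1) B(k + 2/d, N-k) = binom(2/d + k - 1, k-1) B(1 + 2/d, N-1)`.
Consequently the scaling factor `λ_K(N)` of the `K`-nearest-neighbor dynamics equals
`(Σ_{k=1}^K binom(2/d+k-1, k-1) α_k)⁻¹` times the scaling factor `λ₁(N)` of the
nearest-neighbor dynamics, for any nonnegative weights summing to one. -/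
theorem knn_scaling_factor (d N : ℕ) (hd : 1 ≤ d) (hN : 2 ≤ N) :
    (∀ k : ℕ, 1 ≤ k → k ≤ N - 1 →
      ((N - 2).choose (k - 1) : ℝ) * betaFn ((k:ℝ) + 2 / d) ((N:ℝ) - k) =
        genBinom (2 / (d:ℝ) + (k:ℝ) - 1) (k - 1) * betaFn (1 + 2 / d) ((N:ℝ) - 1)) ∧
    (∀ (K : ℕ) (α : ℕ → ℝ), 1 ≤ K → K ≤ N - 1 →
      (∀ k, 0 ≤ α k) → (∑ k ∈ Finset.Icc 1 K, α k = 1) →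
      (((N:ℝ) - 1) * ((d:ℝ) ^ (2 / (d:ℝ) - 1) / 2) *
          ∑ k ∈ Finset.Icc 1 K,
            α k * ((N - 2).choose (k - 1) : ℝ) * betaFn ((k:ℝ) + 2 / d) ((N:ℝ) - k))⁻¹ =
        (∑ k ∈ Finset.Icc 1 K, genBinom (2 / (d:ℝ) + (k:ℝ) - 1) (k - 1) * α k)⁻¹ *
          (((N:ℝ) - 1) * ((d:ℝ) ^ (2 / (d:ℝ) - 1) / 2) * betaFn (1 + 2 / d) ((N:ℝ) - 1))⁻¹) := by
  have hd0 : (0:ℝ) < d := by exact_mod_cast hd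
  have hc : (0:ℝ) < 2 / d := by positivity
  have main : ∀ k : ℕ, 1 ≤ k → k ≤ N - 1 →
      ((N - 2).choose (k - 1) : ℝ) * betaFn ((k:ℝ) + 2 / d) ((N:ℝ) - k) =
        genBinom (2 / (d:ℝ) + (k:ℝ) - 1) (k - 1) * betaFn (1 + 2 / d) ((N:ℝ) - 1) := by
    intro k hk1 hk2
    obtain ⟨k', rfl⟩ : ∃ k', k = k' + 1 := ⟨k - 1, by omega⟩
    obtain ⟨m, rfl⟩ : ∃ m, N = k' + m + 2 := ⟨N - k' - 2, by omega⟩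
    simp only [Nat.add_sub_cancel]
    have hc' : (0:ℝ) < 2 / d := hc
    generalize hcg : (2 / (d:ℝ)) = c at hc' ⊢
    have e1 : ((k' + m + 2 : ℕ) : ℝ) - ((k' + 1 : ℕ) : ℝ) = ((m : ℕ) : ℝ) + 1 := by
      push_cast; ring
    have e2 : ((k' + m + 2 : ℕ) : ℝ) - 1 = ((k' + m : ℕ) : ℝ) + 1 := by
      push_cast; ring
    rw [e1, e2, betaFn_eval _ (by positivity) m, betaFn_eval _ (by positivity) (k' + m)]
    have hsplit : ∏ j ∈ Finset.range (k' + m + 1), (1 + c + (j:ℝ))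
        = (∏ j ∈ Finset.range k', (1 + c + (j:ℝ)))
          * ∏ j ∈ Finset.range (m + 1), (((k' + 1 : ℕ):ℝ) + c + (j:ℝ)) := by
      rw [show k' + m + 1 = k' + (m + 1) from by ring, Finset.prod_range_add]
      congr 1
      refine Finset.prod_congr rfl fun j _ => ?_
      push_cast; ring
    have hG : ∏ j ∈ Finset.range k', (c + ((k' + 1 : ℕ):ℝ) - 1 - (j:ℝ))
        = ∏ j ∈ Finset.range k', (1 + c + (j:ℝ)) := by
      rw [← Finset.prod_range_reflect]
      refine Finset.prod_congr rfl fun j hj => ?_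
      rw [Finset.mem_range] at hj
      have h : ((k' - 1 - j : ℕ) + (j + 1) : ℕ) = k' := by omega
      have h2 : ((k' - 1 - j : ℕ) : ℝ) + ((j:ℝ) + 1) = (k' : ℝ) := by
        exact_mod_cast congrArg (Nat.cast : ℕ → ℝ) h
      push_cast
      linarith
    have hP1 : (0:ℝ) < ∏ j ∈ Finset.range k', (1 + c + (j:ℝ)) :=
      Finset.prod_pos fun j _ => by positivity
    have hP2 : (0:ℝ) < ∏ j ∈ Finset.range (m + 1), (((k' + 1 : ℕ):ℝ) + c + (j:ℝ)) :=
      Finset.prod_pos fun j _ => by positivity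
    have hfacR : ((k' + m).choose k' : ℝ) * (Nat.factorial k' : ℝ) * (Nat.factorial m : ℝ)
        = (Nat.factorial (k' + m) : ℝ) := by
      have h := Nat.choose_mul_factorial_mul_factorial (Nat.le_add_right k' m)
      rw [show k' + m - k' = m from by omega] at h
      exact_mod_cast h
    rw [genBinom, hG, hsplit]
    have hf1 : (0:ℝ) < (Nat.factorial k' : ℝ) := by positivity
    field_simp
    linear_combination hfacR
  refine ⟨main, ?_⟩
  intro K α hK1 hK2 hα hsum
  have hterm : ∀ k ∈ Finset.Icc 1 K,
      α k * ((N - 2).choose (k - 1) : ℝ) * betaFn ((k:ℝ) + 2 / d) ((N:ℝ) - k)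
        = genBinom (2 / (d:ℝ) + (k:ℝ) - 1) (k - 1) * α k * betaFn (1 + 2 / d) ((N:ℝ) - 1) := by
    intro k hk
    rw [Finset.mem_Icc] at hk
    have h := main k hk.1 (le_trans hk.2 hK2)
    rw [mul_assoc, h]; ring
  rw [Finset.sum_congr rfl hterm, ← Finset.sum_mul]
  rw [show ((N:ℝ) - 1) * ((d:ℝ) ^ (2 / (d:ℝ) - 1) / 2) *
        ((∑ k ∈ Finset.Icc 1 K, genBinom (2 / (d:ℝ) + (k:ℝ) - 1) (k - 1) * α k) *
          betaFn (1 + 2 / d) ((N:ℝ) - 1))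
      = (∑ k ∈ Finset.Icc 1 K, genBinom (2 / (d:ℝ) + (k:ℝ) - 1) (k - 1) * α k) *
        (((N:ℝ) - 1) * ((d:ℝ) ^ (2 / (d:ℝ) - 1) / 2) * betaFn (1 + 2 / d) ((N:ℝ) - 1))
      from by ring, mul_inv]
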